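/- (Symmetry for random initial configurations of fixed density) Let n be odd, η ∈ [0,1], t ∈ ℕ and 0 ≤ n₁ < n/2. Then the probability that a uniformly random configuration with exactly n₁ ones is correctly classified by time t equals the corresponding probability for a uniformly random configuration with exactly n−n₁ ones: (1/C(n,n₁)) · ∑_{c : #₁(c)=n₁} Φη^t(c)({e₀}) = (1/C(n,n−n₁)) · ∑_{c : #₁(c)=n−n₁} Φη^t(c)({e₁}). -/

import Mathlib

open scoped ENNReal

/-- A configuration of the ring of `n` cells, each in a state from `Fin 2`. -/
abbrev Config (n : ℕ) := ZMod n → Fin 2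

/-- The traffic-majority local rule `φ_η`. -/
def phi (η : ℝ) (a b c : Fin 2) : ℝ :=
  if b = 0 then
    if a = 1 then (if c = 1 then 1 else 1 - η) else 0
  else
    if a = 0 ∧ c = 0 then 0 else if a = 1 ∧ c = 0 then η else 1

lemma phi_nonneg {η : ℝ} (h0 : 0 ≤ η) (h1 : η ≤ 1) (a b c : Fin 2) :
    0 ≤ phi η a b c := by
  unfold phi; split_ifs <;> linarith

lemma phi_le_one {η : ℝ} (h0 : 0 ≤ η) (h1 : η ≤ 1) (a b c : Fin 2) :
    phi η a b c ≤ 1 := by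
  unfold phi; split_ifs <;> linarith

/-- The probability (as an extended nonnegative real) that, starting from
configuration `c`, the cell at `x` is in state `σ` after one step. -/
noncomputable def cellWeight (n : ℕ) (η : ℝ) (c : Config n) (x : ZMod n) (σ : Fin 2) : ℝ≥0∞ :=
  if σ = 1 then ENNReal.ofReal (phi η (c (x - 1)) (c x) (c (x + 1)))
  else ENNReal.ofReal (1 - phi η (c (x - 1)) (c x) (c (x + 1)))

/-- The probability of the transition `c → c'` in one step: the cells are
updated independently. -/
noncomputable def stepFun (n : ℕ) [NeZero n] (η : ℝ) (c c' : Config n) : ℝ≥0∞ :=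
  ∏ x : ZMod n, cellWeight n η c x (c' x)

lemma stepFun_sum (n : ℕ) [NeZero n] {η : ℝ} (h0 : 0 ≤ η) (h1 : η ≤ 1)
    (c : Config n) : ∑ c' : Config n, stepFun n η c c' = 1 := by
  have h := Finset.prod_univ_sum (fun _ : ZMod n => (Finset.univ : Finset (Fin 2)))
    (fun x σ => cellWeight n η c x σ)
  rw [Fintype.piFinset_univ] at h
  have h2 : ∀ x : ZMod n, ∑ σ : Fin 2, cellWeight n η c x σ = 1 := by
    intro x
    rw [Fin.sum_univ_two]
    simp only [cellWeight]
    norm_num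
    rw [← ENNReal.ofReal_add (by linarith [phi_le_one h0 h1 (c (x-1)) (c x) (c (x+1))])
      (phi_nonneg h0 h1 (c (x-1)) (c x) (c (x+1)))]
    norm_num
  rw [Finset.prod_congr rfl (fun x _ => h2 x), Finset.prod_const_one] at h
  exact h.symm

/-- The global transition `Φ_η` of the traffic-majority rule, as a PMF. -/
noncomputable def step (n : ℕ) [NeZero n] (η : ℝ) (h0 : 0 ≤ η) (h1 : η ≤ 1) (c : Config n) :
    PMF (Config n) :=
  PMF.ofFintype (stepFun n η c) (stepFun_sum n h0 h1 c)

/-- The `t`-step distribution `Φ_η^t(c)`, obtained by `t`-fold monadic bind. -/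
noncomputable def iter (n : ℕ) [NeZero n] (η : ℝ) (h0 : 0 ≤ η) (h1 : η ≤ 1) :
    ℕ → Config n → PMF (Config n)
  | 0, c => PMF.pure c
  | (t + 1), c => (step n η h0 h1 c).bind (iter n η h0 h1 t)

/-- The inversion `c̄` of a configuration: `c̄(x) = 1 - c(-x)`. -/
def conf_inv (n : ℕ) (c : Config n) : Config n := fun x => 1 - c (-x)

/-- The constant configuration with all cells in state `σ`. -/
def endSt (n : ℕ) (σ : Fin 2) : Config n := fun _ => σ

/-- The number of cells of `c` in state 1. -/
def ones (n : ℕ) [NeZero n] (c : Config n) : ℕ :=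
  (Finset.univ.filter fun x => c x = 1).card

/-- The correct end state for the configuration `c` (`n` odd):
`e₁` if more than half of the cells are in state 1, and `e₀` otherwise. -/
def target (n : ℕ) [NeZero n] (c : Config n) : Config n :=
  if n < 2 * ones n c then endSt n 1 else endSt n 0

/-- The 1-block of length `ℓ`. -/
def block (n ℓ : ℕ) : Config n := fun x => if x.val < ℓ then 1 else 0


lemma fin2_sub_sub (a : Fin 2) : 1 - (1 - a) = a := by fin_cases a <;> rfl

lemma conf_inv_involutive (n : ℕ) : Function.Involutive (conf_inv n) := by
  intro c; funext x; simp [conf_inv, fin2_sub_sub]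

lemma phi_inv (η : ℝ) (a b c : Fin 2) :
    phi η (1 - c) (1 - b) (1 - a) = 1 - phi η a b c := by
  fin_cases a <;> fin_cases b <;> fin_cases c <;> simp [phi] <;> ring

lemma cellWeight_inv (n : ℕ) (η : ℝ) (c : Config n) (x : ZMod n) (σ : Fin 2) :
    cellWeight n η (conf_inv n c) x σ = cellWeight n η c (-x) (1 - σ) := by
  have hphi : phi η (conf_inv n c (x - 1)) (conf_inv n c x) (conf_inv n c (x + 1))
      = 1 - phi η (c (-x - 1)) (c (-x)) (c (-x + 1)) := by
    have : conf_inv n c (x - 1) = 1 - c (-x + 1) := by simp [conf_inv]; ring_nf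
    rw [this]
    have : conf_inv n c (x + 1) = 1 - c (-x - 1) := by simp [conf_inv]; ring_nf
    rw [this]
    have : conf_inv n c x = 1 - c (-x) := rfl
    rw [this, phi_inv]
  fin_cases σ <;> simp [cellWeight, hphi]

lemma stepFun_inv (n : ℕ) [NeZero n] (η : ℝ) (c c' : Config n) :
    stepFun n η (conf_inv n c) (conf_inv n c') = stepFun n η c c' := by
  unfold stepFun
  rw [← Equiv.prod_comp (Equiv.neg (ZMod n)) (fun x => cellWeight n η c x (c' x))]
  apply Finset.prod_congr rfl
  intro x _
  rw [cellWeight_inv]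
  congr 1
  show 1 - conf_inv n c' x = c' (-x)
  simp [conf_inv, fin2_sub_sub]

lemma iter_inv (n : ℕ) [NeZero n] (η : ℝ) (h0 : 0 ≤ η) (h1 : η ≤ 1) :
    ∀ (t : ℕ) (c c' : Config n),
      iter n η h0 h1 t (conf_inv n c) (conf_inv n c') = iter n η h0 h1 t c c' := by
  intro t
  induction t with
  | zero =>
    intro c c'
    simp only [iter, PMF.pure_apply]
    by_cases h : c' = c
    · simp [h]
    · have h2 : conf_inv n c' ≠ conf_inv n c :=
        fun he => h ((conf_inv_involutive n).injective he)
      simp [h, h2]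
  | succ t ih =>
    intro c c'
    simp only [iter, PMF.bind_apply, tsum_fintype]
    rw [← Equiv.sum_comp ((conf_inv_involutive n).toPerm)
      (fun a => step n η h0 h1 (conf_inv n c) a * iter n η h0 h1 t a (conf_inv n c'))]
    apply Finset.sum_congr rfl
    intro a _
    show step n η h0 h1 (conf_inv n c) (conf_inv n a) * iter n η h0 h1 t (conf_inv n a) (conf_inv n c')
        = step n η h0 h1 c a * iter n η h0 h1 t a c'
    rw [ih]
    congr 1
    simp only [step, PMF.ofFintype_apply]
    exact stepFun_inv n η c a

lemma fin2_eq_one_sub (a : Fin 2) : (1 - a = 1) ↔ (a = 0) := by fin_cases a <;> simp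

lemma ones_inv (n : ℕ) [NeZero n] (c : Config n) :
    ones n (conf_inv n c) = n - ones n c := by
  have h1 : ones n (conf_inv n c)
      = (Finset.univ.filter fun x : ZMod n => c x = 0).card := by
    unfold ones
    apply Finset.card_nbij' (fun x => -x) (fun x => -x)
    · intro x hx
      simp only [Finset.mem_coe, Finset.mem_filter, Finset.mem_univ, true_and, conf_inv,
        fin2_eq_one_sub] at hx ⊢
      exact hx
    · intro x hx
      simp only [Finset.mem_coe, Finset.mem_filter, Finset.mem_univ, true_and, conf_inv,
        fin2_eq_one_sub, neg_neg] at hx ⊢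
      exact hx
    · intro x _; simp
    · intro x _; simp
  have h2 : (Finset.univ.filter fun x : ZMod n => c x = 0).card
      + ones n c = n := by
    unfold ones
    have hnot : ∀ x : ZMod n, (c x = 0) ↔ ¬ (c x = 1) := by
      intro x
      have : ∀ a : Fin 2, (a = 0) ↔ ¬ (a = 1) := by decide
      exact this (c x)
    rw [Finset.filter_congr (fun x _ => hnot x), add_comm,
      Finset.card_filter_add_card_filter_not, Finset.card_univ, ZMod.card]
  omega

lemma endSt_inv (n : ℕ) : conf_inv n (endSt n 0) = endSt n 1 := by
  funext x; rfl

/-- Symmetry for random initial configurations of fixed density: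
for `n` odd and `n₁ < n/2`, the probability that a uniformly random
configuration with exactly `n₁` ones has reached `e₀` after `t` steps equals
the probability that a uniformly random configuration with exactly `n - n₁`
ones has reached `e₁` after `t` steps. -/
theorem density_symmetry (n : ℕ) [NeZero n] (hn : Odd n) (η : ℝ)
    (h0 : 0 ≤ η) (h1 : η ≤ 1) (t : ℕ) (n₁ : ℕ) (hlt : 2 * n₁ < n) :
    ((n.choose n₁ : ℝ≥0∞))⁻¹ *
        ∑ c ∈ Finset.univ.filter (fun c : Config n => ones n c = n₁),
          iter n η h0 h1 t c (endSt n 0)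
      = ((n.choose (n - n₁) : ℝ≥0∞))⁻¹ *
        ∑ c ∈ Finset.univ.filter (fun c : Config n => ones n c = n - n₁),
          iter n η h0 h1 t c (endSt n 1) := by
  have hle : n₁ ≤ n := by omega
  rw [Nat.choose_symm hle]
  congr 1
  rw [← endSt_inv n]
  apply Finset.sum_nbij' (conf_inv n) (conf_inv n)
  · intro c hc
    simp only [Finset.mem_filter, Finset.mem_univ, true_and] at hc ⊢
    rw [ones_inv, hc]
  · intro c hc
    simp only [Finset.mem_filter, Finset.mem_univ, true_and] at hc ⊢
    rw [ones_inv, hc]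
    omega
  · intro c _; exact conf_inv_involutive n c
  · intro c _; exact conf_inv_involutive n c
  · intro c _
    exact (iter_inv n η h0 h1 t c (endSt n 0)).symm
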